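/- arXiv:1710.03746 — 7 statements merged into one kernel-verified Lean document; each statement's English description precedes it below -/
import Mathlib

section
/- For any real numbers s₁, s₂, s₃, the normalizing constant of the matrix Fisher distribution is invariant under cyclic permutation of the diagonal entries: c(diag[s₁,s₂,s₃]) = c(diag[s₂,s₃,s₁]) = c(diag[s₃,s₁,s₂]). -/
open MeasureTheory Matrix Real

noncomputable section

/-- The space of real 3×3 matrices. -/
abbrev M3 : Type := Matrix (Fin 3) (Fin 3) ℝ

instance : MeasurableSpace M3 := inferInstanceAs (MeasurableSpace (Fin 3 → Fin 3 → ℝ))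

/-- The special orthogonal group SO(3), as a set of real 3×3 matrices. -/
def SO3 : Set M3 := {R | Rᵀ * R = 1 ∧ R.det = 1}

/-- The normalizing constant of the matrix Fisher distribution,
`c(F) = ∫_{SO(3)} exp(tr(Fᵀ R)) dR`. -/
noncomputable def mfC (μ : Measure M3) (F : M3) : ℝ :=
  ∫ R, Real.exp (Fᵀ * R).trace ∂μ

instance : BorelSpace M3 := inferInstanceAs (BorelSpace (Fin 3 → Fin 3 → ℝ))

lemma SO3.transpose {Q : M3} (hQ : Q ∈ SO3) : Qᵀ ∈ SO3 := by
  obtain ⟨h1, h2⟩ := hQ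
  have hinv : Q * Qᵀ = 1 := by
    have := mul_eq_one_comm.mp h1
    simpa using this
  exact ⟨by simpa using hinv, by simpa [Matrix.det_transpose] using h2⟩

lemma mfC_conj (μ : Measure M3)
    (hleft : ∀ Q ∈ SO3, μ.map (fun R => Q * R) = μ)
    (hright : ∀ Q ∈ SO3, μ.map (fun R => R * Q) = μ)
    {Q : M3} (hQ : Q ∈ SO3) (F : M3) :
    mfC μ F = mfC μ (Qᵀ * F * Q) := by
  have hcl : Continuous (fun R : M3 => Q * R) := continuous_const.matrix_mul continuous_id
  have hcr : Continuous (fun R : M3 => R * Qᵀ) := continuous_id.matrix_mul continuous_const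
  have hmap : μ.map (fun R : M3 => Q * R * Qᵀ) = μ := by
    have : (fun R : M3 => Q * R * Qᵀ) = (fun R : M3 => R * Qᵀ) ∘ (fun R : M3 => Q * R) := rfl
    rw [this, ← Measure.map_map hcr.measurable hcl.measurable, hleft Q hQ,
      hright Qᵀ (SO3.transpose hQ)]
  have hg : Continuous (fun R : M3 => Real.exp (Fᵀ * R).trace) :=
    Real.continuous_exp.comp (Continuous.matrix_trace (continuous_const.matrix_mul continuous_id))
  calc mfC μ F = ∫ R, Real.exp (Fᵀ * R).trace ∂(μ.map (fun R : M3 => Q * R * Qᵀ)) := by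
        rw [hmap]; rfl
    _ = ∫ R, Real.exp (Fᵀ * (Q * R * Qᵀ)).trace ∂μ :=
        integral_map (hcr.measurable.comp hcl.measurable).aemeasurable
          hg.aestronglyMeasurable
    _ = mfC μ (Qᵀ * F * Q) := by
        unfold mfC
        congr 1
        ext R
        congr 1
        rw [show Fᵀ * (Q * R * Qᵀ) = (Fᵀ * (Q * R)) * Qᵀ by simp [Matrix.mul_assoc],
          Matrix.trace_mul_comm]
        simp [Matrix.transpose_mul, Matrix.mul_assoc]

/-- For the bi-invariant Haar probability measure `μ` on SO(3)
(a probability measure supported on SO(3), invariant under left and right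
translations by elements of SO(3)), the normalizing constant of the matrix
Fisher distribution is invariant under cyclic permutation of the diagonal entries:
`c(diag[s₁,s₂,s₃]) = c(diag[s₂,s₃,s₁]) = c(diag[s₃,s₁,s₂])`. -/
theorem matrixFisher_normalizing_cyclic
    (μ : Measure M3) [IsProbabilityMeasure μ] (hsupp : μ SO3ᶜ = 0)
    (hleft : ∀ Q ∈ SO3, μ.map (fun R => Q * R) = μ)
    (hright : ∀ Q ∈ SO3, μ.map (fun R => R * Q) = μ)
    (s₁ s₂ s₃ : ℝ) :
    mfC μ (Matrix.diagonal ![s₁, s₂, s₃]) = mfC μ (Matrix.diagonal ![s₂, s₃, s₁]) ∧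
    mfC μ (Matrix.diagonal ![s₁, s₂, s₃]) = mfC μ (Matrix.diagonal ![s₃, s₁, s₂]) := by
  set P : M3 := !![0,1,0; 0,0,1; 1,0,0] with hP
  have hPSO : P ∈ SO3 := by
    constructor
    · ext i j; fin_cases i <;> fin_cases j <;>
        simp [hP, Matrix.mul_apply, Fin.sum_univ_three, Matrix.one_apply, Matrix.transpose_apply, Matrix.vecHead, Matrix.vecTail]
    · simp [hP, Matrix.det_fin_three]
  constructor
  · have := mfC_conj μ hleft hright (SO3.transpose hPSO) (Matrix.diagonal ![s₁, s₂, s₃])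
    rw [this]
    congr 1
    ext i j
    fin_cases i <;> fin_cases j <;>
      simp [hP, Matrix.mul_apply, Fin.sum_univ_three, Matrix.diagonal, Matrix.transpose_apply, Matrix.vecHead, Matrix.vecTail]
  · have := mfC_conj μ hleft hright hPSO (Matrix.diagonal ![s₁, s₂, s₃])
    rw [this]
    congr 1
    ext i j
    fin_cases i <;> fin_cases j <;>
      simp [hP, Matrix.mul_apply, Fin.sum_univ_three, Matrix.diagonal, Matrix.transpose_apply, Matrix.vecHead, Matrix.vecTail]

end
end

section
/- Let S = diag[s₁,s₂,s₃] with s₁ ≥ s₂ ≥ |s₃| ≥ 0. Then exp(−s₁−s₂+s₃) ≤ c(S) ≤ exp(s₁+s₂+s₃), and both inequalities are strict whenever S ≠ 0. -/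
open MeasureTheory Matrix Real

noncomputable section

lemma key6 (a b c d e f : ℝ) (h0 : a^2+b^2+c^2 = 1) (h1 : d^2+e^2+f^2 = 1)
    (h01 : a*d+b*e+c*f = 0) : 0 ≤ 1 + a + e + (a*e - b*d) := by
  have hE : (2+2*a)*(2+2*e) - (b+d)^2 =
      ((1+a)*(1+e)-b*d)^2 + ((1+a)*f-c*d)^2 + (b*f-c*(1+e))^2 := by
    have hA : (1+a)^2+b^2+c^2 = 2+2*a := by linear_combination h0
    have hB : d^2+(1+e)^2+f^2 = 2+2*e := by linear_combination h1
    have hC : (1+a)*d+b*(1+e)+c*f = b+d := by linear_combination h01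
    calc (2+2*a)*(2+2*e) - (b+d)^2
        = ((1+a)^2+b^2+c^2)*(d^2+(1+e)^2+f^2) - ((1+a)*d+b*(1+e)+c*f)^2 := by
          rw [hA, hB, hC]
      _ = _ := by ring
  nlinarith [hE, sq_nonneg ((1+a)*(1+e)-b*d), sq_nonneg ((1+a)*f-c*d),
    sq_nonneg (b*f-c*(1+e)), sq_nonneg (b-d)]

lemma trace_ge_neg_one {R : M3} (hR : R ∈ SO3) :
    -1 ≤ R 0 0 + R 1 1 + R 2 2 := by
  obtain ⟨hR, hd⟩ := hR
  have hR' : R * Rᵀ = 1 := mul_eq_one_comm.mp hR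
  have hadj : adjugate R = Rᵀ := by
    have h1 : R * adjugate R = 1 := by rw [Matrix.mul_adjugate, hd, one_smul]
    calc adjugate R = (Rᵀ * R) * adjugate R := by rw [hR, one_mul]
      _ = Rᵀ * (R * adjugate R) := by rw [Matrix.mul_assoc]
      _ = Rᵀ := by rw [h1, mul_one]
  have h22 : R 2 2 = R 0 0 * R 1 1 - R 0 1 * R 1 0 := by
    have := congrFun (congrFun (Matrix.adjugate_fin_three R) 2) 2
    rw [hadj] at this
    simpa using this
  have hr : ∀ i j : Fin 3, R i 0 * R j 0 + R i 1 * R j 1 + R i 2 * R j 2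
      = (1 : M3) i j := by
    intro i j
    have := congrFun (congrFun hR' i) j
    simpa [Matrix.mul_apply, Fin.sum_univ_three, Matrix.transpose_apply] using this
  have r00 := hr 0 0; have r11 := hr 1 1; have r01 := hr 0 1
  simp [Matrix.one_apply] at r00 r11 r01
  have := key6 (R 0 0) (R 0 1) (R 0 2) (R 1 0) (R 1 1) (R 1 2)
    (by nlinarith [r00]) (by nlinarith [r11]) (by linarith [r01])
  rw [h22]; linarith

lemma SO3_mul {Q R : M3} (hQ : Q ∈ SO3) (hR : R ∈ SO3) : Q * R ∈ SO3 := by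
  obtain ⟨hQ1, hQ2⟩ := hQ; obtain ⟨hR1, hR2⟩ := hR
  constructor
  · rw [Matrix.transpose_mul]
    calc Rᵀ * Qᵀ * (Q * R) = Rᵀ * (Qᵀ * Q) * R := by
          rw [Matrix.mul_assoc, Matrix.mul_assoc, Matrix.mul_assoc]
      _ = 1 := by rw [hQ1, Matrix.mul_one, hR1]
  · rw [Matrix.det_mul, hQ2, hR2, one_mul]

lemma signs_mem (a b c : ℝ) (ha : a*a = 1) (hb : b*b = 1) (hc : c*c = 1)
    (habc : a*b*c = 1) : Matrix.diagonal ![a,b,c] ∈ SO3 := by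
  constructor
  · rw [Matrix.diagonal_transpose, Matrix.diagonal_mul_diagonal]
    ext i j
    fin_cases i <;> fin_cases j <;>
      simp [Matrix.diagonal_apply, Matrix.one_apply, ha, hb, hc]
  · rw [Matrix.det_diagonal, Fin.prod_univ_three]
    simpa using habc

lemma diag_mul_diag_entries (d : Fin 3 → ℝ) (R : M3) (i : Fin 3) :
    (Matrix.diagonal d * R) i i = d i * R i i := by
  simp [Matrix.mul_apply, Matrix.diagonal_apply, Finset.sum_ite_eq]

/-- pointwise bounds for R ∈ SO3 -/
lemma diag_trace_bounds (s₁ s₂ s₃ : ℝ) (h12 : s₁ ≥ s₂) (h23 : s₂ ≥ |s₃|)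
    {R : M3} (hR : R ∈ SO3) :
    -s₁ - s₂ + s₃ ≤ s₁ * R 0 0 + s₂ * R 1 1 + s₃ * R 2 2 ∧
    s₁ * R 0 0 + s₂ * R 1 1 + s₃ * R 2 2 ≤ s₁ + s₂ + s₃ := by
  have h3a : -s₂ ≤ s₃ := neg_le_of_abs_le h23
  have h3b : s₃ ≤ s₂ := le_of_abs_le h23
  have hm : ∀ a b c : ℝ, a*a = 1 → b*b = 1 → c*c = 1 → a*b*c = 1 →
      -1 ≤ a * R 0 0 + b * R 1 1 + c * R 2 2 := by
    intro a b c ha hb hc habc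
    have hmem := SO3_mul (signs_mem a b c ha hb hc habc) hR
    have ht := trace_ge_neg_one hmem
    rw [diag_mul_diag_entries, diag_mul_diag_entries, diag_mul_diag_entries] at ht
    simp at ht
    linarith [ht]
  have T4 := hm 1 1 1 (by norm_num) (by norm_num) (by norm_num) (by norm_num)
  have T1 := hm (-1) (-1) 1 (by norm_num) (by norm_num) (by norm_num) (by norm_num)
  have T2 := hm (-1) 1 (-1) (by norm_num) (by norm_num) (by norm_num) (by norm_num)
  have T3 := hm 1 (-1) (-1) (by norm_num) (by norm_num) (by norm_num) (by norm_num)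
  constructor
  · nlinarith [mul_nonneg (by linarith : (0:ℝ) ≤ s₁ + s₂) (by linarith : (0:ℝ) ≤ 1 + (R 0 0 + R 1 1 + R 2 2)),
      mul_nonneg (by linarith : (0:ℝ) ≤ s₁ - s₃) (by linarith : (0:ℝ) ≤ 1 + (R 0 0 - R 1 1 - R 2 2)),
      mul_nonneg (by linarith : (0:ℝ) ≤ s₂ - s₃) (by linarith : (0:ℝ) ≤ 1 + (-R 0 0 + R 1 1 - R 2 2))]
  · nlinarith [mul_nonneg (by linarith : (0:ℝ) ≤ s₁ + s₂) (by linarith : (0:ℝ) ≤ 1 + (-R 0 0 - R 1 1 + R 2 2)),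
      mul_nonneg (by linarith : (0:ℝ) ≤ s₁ + s₃) (by linarith : (0:ℝ) ≤ 1 + (-R 0 0 + R 1 1 - R 2 2)),
      mul_nonneg (by linarith : (0:ℝ) ≤ s₂ + s₃) (by linarith : (0:ℝ) ≤ 1 + (R 0 0 - R 1 1 - R 2 2))]

/-- Let `S = diag[s₁,s₂,s₃]` with `s₁ ≥ s₂ ≥ |s₃| ≥ 0`.
Then for the bi-invariant Haar probability measure on SO(3),
`exp(−s₁−s₂+s₃) ≤ c(S) ≤ exp(s₁+s₂+s₃)`, and both inequalities are strict
whenever `S ≠ 0`. -/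
theorem matrixFisher_normalizing_bounds
    (μ : Measure M3) [IsProbabilityMeasure μ] (hsupp : μ SO3ᶜ = 0)
    (hleft : ∀ Q ∈ SO3, μ.map (fun R => Q * R) = μ)
    (hright : ∀ Q ∈ SO3, μ.map (fun R => R * Q) = μ)
    (s₁ s₂ s₃ : ℝ) (h12 : s₁ ≥ s₂) (h23 : s₂ ≥ |s₃|) :
    (Real.exp (-s₁ - s₂ + s₃) ≤ mfC μ (Matrix.diagonal ![s₁, s₂, s₃]) ∧
      mfC μ (Matrix.diagonal ![s₁, s₂, s₃]) ≤ Real.exp (s₁ + s₂ + s₃)) ∧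
    (Matrix.diagonal ![s₁, s₂, s₃] ≠ 0 →
      Real.exp (-s₁ - s₂ + s₃) < mfC μ (Matrix.diagonal ![s₁, s₂, s₃]) ∧
      mfC μ (Matrix.diagonal ![s₁, s₂, s₃]) < Real.exp (s₁ + s₂ + s₃)) := by
  set f : M3 → ℝ := fun R => s₁ * R 0 0 + s₂ * R 1 1 + s₃ * R 2 2 with hfdef
  have hmeas_entry : ∀ i j : Fin 3, Measurable fun R : M3 => R i j :=
    fun i j => (measurable_pi_apply j).comp (measurable_pi_apply i)
  have hmf_meas : Measurable f :=
    ((measurable_const.mul (hmeas_entry 0 0)).add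
      (measurable_const.mul (hmeas_entry 1 1))).add
      (measurable_const.mul (hmeas_entry 2 2))
  have hg_meas : Measurable fun R => Real.exp (f R) := Real.measurable_exp.comp hmf_meas
  have htr : ∀ R : M3, ((Matrix.diagonal ![s₁, s₂, s₃])ᵀ * R).trace = f R := by
    intro R
    rw [Matrix.diagonal_transpose, Matrix.trace_fin_three,
      diag_mul_diag_entries, diag_mul_diag_entries, diag_mul_diag_entries]
    simp [hfdef]
  have hmf : mfC μ (Matrix.diagonal ![s₁, s₂, s₃]) = ∫ R, Real.exp (f R) ∂μ := by
    unfold mfC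
    exact integral_congr_ae (Filter.Eventually.of_forall fun R => congrArg Real.exp (htr R))
  have hae : ∀ᵐ R ∂μ, R ∈ SO3 := mem_ae_iff.mpr (by simpa using hsupp)
  have hbound : ∀ᵐ R ∂μ, -s₁ - s₂ + s₃ ≤ f R ∧ f R ≤ s₁ + s₂ + s₃ :=
    hae.mono fun R hR => diag_trace_bounds s₁ s₂ s₃ h12 h23 hR
  have hgint : Integrable (fun R => Real.exp (f R)) μ := by
    apply Integrable.mono' (integrable_const (Real.exp (s₁ + s₂ + s₃)))
      hg_meas.aestronglyMeasurable
    filter_upwards [hbound] with R hb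
    rw [Real.norm_eq_abs, abs_of_pos (Real.exp_pos _)]
    exact Real.exp_le_exp.mpr hb.2
  have hfint : Integrable f μ := by
    apply Integrable.mono' (integrable_const (s₁ + s₂ + |s₃|))
      hmf_meas.aestronglyMeasurable
    filter_upwards [hbound] with R hb
    rw [Real.norm_eq_abs, abs_le]
    constructor <;> [linarith [neg_abs_le s₃, hb.1]; linarith [le_abs_self s₃, hb.2]]
  have hle : mfC μ (Matrix.diagonal ![s₁, s₂, s₃]) ≤ Real.exp (s₁ + s₂ + s₃) := by
    rw [hmf]
    calc ∫ R, Real.exp (f R) ∂μ ≤ ∫ _R, Real.exp (s₁ + s₂ + s₃) ∂μ :=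
        integral_mono_ae hgint (integrable_const _)
          (hbound.mono fun R hb => Real.exp_le_exp.mpr hb.2)
      _ = Real.exp (s₁ + s₂ + s₃) := by simp
  have hge : Real.exp (-s₁ - s₂ + s₃) ≤ mfC μ (Matrix.diagonal ![s₁, s₂, s₃]) := by
    rw [hmf]
    calc Real.exp (-s₁ - s₂ + s₃) = ∫ _R, Real.exp (-s₁ - s₂ + s₃) ∂μ := by simp
      _ ≤ ∫ R, Real.exp (f R) ∂μ :=
        integral_mono_ae (integrable_const _) hgint
          (hbound.mono fun R hb => Real.exp_le_exp.mpr hb.1)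
  -- the mean of f is zero
  have hmulmeas : ∀ Q : M3, Measurable fun R : M3 => Q * R := by
    intro Q
    apply measurable_pi_lambda; intro i; apply measurable_pi_lambda; intro j
    show Measurable fun R : M3 => (Q * R) i j
    simp only [Matrix.mul_apply, Fin.sum_univ_three]
    exact ((measurable_const.mul (hmeas_entry 0 j)).add
      (measurable_const.mul (hmeas_entry 1 j))).add
      (measurable_const.mul (hmeas_entry 2 j))
  have hmapint : ∀ Q ∈ SO3, ∫ R, f (Q * R) ∂μ = ∫ R, f R ∂μ := by
    intro Q hQ
    conv_rhs => rw [← hleft Q hQ]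
    rw [integral_map (hmulmeas Q).aemeasurable
      (by rw [hleft Q hQ]; exact hmf_meas.aestronglyMeasurable)]
  have hcompint : ∀ Q ∈ SO3, Integrable (fun R => f (Q * R)) μ := by
    intro Q hQ
    exact (integrable_map_measure
      (by rw [hleft Q hQ]; exact hmf_meas.aestronglyMeasurable)
      (hmulmeas Q).aemeasurable).mp (by rw [hleft Q hQ]; exact hfint)
  have hQ1 : Matrix.diagonal ![(-1:ℝ),-1,1] ∈ SO3 :=
    signs_mem _ _ _ (by norm_num) (by norm_num) (by norm_num) (by norm_num)
  have hQ2 : Matrix.diagonal ![(-1:ℝ),1,-1] ∈ SO3 :=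
    signs_mem _ _ _ (by norm_num) (by norm_num) (by norm_num) (by norm_num)
  have hQ3 : Matrix.diagonal ![(1:ℝ),-1,-1] ∈ SO3 :=
    signs_mem _ _ _ (by norm_num) (by norm_num) (by norm_num) (by norm_num)
  have hzero : ∀ R : M3, f R + f (Matrix.diagonal ![(-1:ℝ),-1,1] * R)
      + f (Matrix.diagonal ![(-1:ℝ),1,-1] * R)
      + f (Matrix.diagonal ![(1:ℝ),-1,-1] * R) = 0 := by
    intro R
    simp only [hfdef, diag_mul_diag_entries]
    simp
    ring
  have hintf : ∫ R, f R ∂μ = 0 := by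
    have h4 : ∫ R, f R ∂μ + ∫ R, f (Matrix.diagonal ![(-1:ℝ),-1,1] * R) ∂μ
        + ∫ R, f (Matrix.diagonal ![(-1:ℝ),1,-1] * R) ∂μ
        + ∫ R, f (Matrix.diagonal ![(1:ℝ),-1,-1] * R) ∂μ = 0 := by
      have expand : ∫ R, (f R + f (Matrix.diagonal ![(-1:ℝ),-1,1] * R)
          + f (Matrix.diagonal ![(-1:ℝ),1,-1] * R)
          + f (Matrix.diagonal ![(1:ℝ),-1,-1] * R)) ∂μ
          = ∫ R, f R ∂μ + ∫ R, f (Matrix.diagonal ![(-1:ℝ),-1,1] * R) ∂μ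
          + ∫ R, f (Matrix.diagonal ![(-1:ℝ),1,-1] * R) ∂μ
          + ∫ R, f (Matrix.diagonal ![(1:ℝ),-1,-1] * R) ∂μ := by
        have i1 : Integrable (fun R : M3 => f R + f (Matrix.diagonal ![(-1:ℝ),-1,1] * R)) μ :=
          hfint.add (hcompint _ hQ1)
        have i2 : Integrable (fun R : M3 => f R + f (Matrix.diagonal ![(-1:ℝ),-1,1] * R)
            + f (Matrix.diagonal ![(-1:ℝ),1,-1] * R)) μ := i1.add (hcompint _ hQ2)
        rw [integral_add i2 (hcompint _ hQ3), integral_add i1 (hcompint _ hQ2),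
          integral_add hfint (hcompint _ hQ1)]
      rw [← expand]
      simp only [hzero]
      simp
    rw [hmapint _ hQ1, hmapint _ hQ2, hmapint _ hQ3] at h4
    linarith
  refine ⟨⟨hge, hle⟩, fun hS0 => ?_⟩
  have hs1 : 0 < s₁ := by
    rcases lt_or_ge 0 s₁ with h | h
    · exact h
    · exfalso
      have h2 : s₂ = 0 := le_antisymm (h12.trans h) ((abs_nonneg s₃).trans h23)
      have h3 : s₃ = 0 := abs_eq_zero.mp (le_antisymm (h2 ▸ h23) (abs_nonneg s₃))
      have h1 : s₁ = 0 := le_antisymm h (h2 ▸ h12)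
      apply hS0
      rw [h1, h2, h3]
      ext i j
      fin_cases i <;> fin_cases j <;> simp [Matrix.diagonal_apply]
  constructor
  · have h1le : (1:ℝ) ≤ mfC μ (Matrix.diagonal ![s₁, s₂, s₃]) := by
      rw [hmf]
      have hmono : ∫ R, (1 + f R) ∂μ ≤ ∫ R, Real.exp (f R) ∂μ :=
        integral_mono ((integrable_const 1).add hfint) hgint
          (fun R => by linarith [Real.add_one_le_exp (f R)])
      rw [integral_add (integrable_const 1) hfint, hintf] at hmono
      simpa using hmono
    have : Real.exp (-s₁ - s₂ + s₃) < 1 :=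
      Real.exp_lt_one_iff.mpr (by linarith [le_abs_self s₃, h23])
    linarith
  · refine lt_of_le_of_ne hle fun heq => ?_
    have hnn : 0 ≤ᵐ[μ] fun R => Real.exp (s₁ + s₂ + s₃) - Real.exp (f R) :=
      hbound.mono fun R hb => sub_nonneg.mpr (Real.exp_le_exp.mpr hb.2)
    have hint' : Integrable (fun R => Real.exp (s₁ + s₂ + s₃) - Real.exp (f R)) μ :=
      (integrable_const _).sub hgint
    have hz : ∫ R, (Real.exp (s₁ + s₂ + s₃) - Real.exp (f R)) ∂μ = 0 := by
      rw [integral_sub (integrable_const _) hgint, ← hmf, heq]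
      simp
    have hae0 := (integral_eq_zero_iff_of_nonneg_ae hnn hint').mp hz
    have hfM : f =ᵐ[μ] fun _ => s₁ + s₂ + s₃ := by
      filter_upwards [hae0] with R hR
      have hexp : Real.exp (f R) = Real.exp (s₁ + s₂ + s₃) := by
        have : Real.exp (s₁ + s₂ + s₃) - Real.exp (f R) = 0 := hR
        linarith
      exact Real.exp_eq_exp.mp hexp
    have hM : ∫ R, f R ∂μ = s₁ + s₂ + s₃ := by
      rw [integral_congr_ae hfM]
      simp
    rw [hintf] at hM
    have : 0 < s₁ + s₂ + s₃ := by linarith [neg_abs_le s₃, h23]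
    linarith

end
end

section
/- Define c : ℝ³ → ℝ by c(s₁,s₂,s₃) = ∫_{SO(3)} exp(s₁Q₁₁ + s₂Q₂₂ + s₃Q₃₃) dQ. For s₁ ≥ s₂ ≥ |s₃| ≥ 0, the partial derivatives of c satisfy: (a) ∂c/∂s_i + ∂c/∂s_j ≥ 0 for every (i,j,k) ∈ 𝓘 = {(1,2,3),(2,3,1),(3,1,2)}, and (b) 0 ≤ |∂c/∂s₃| ≤ ∂c/∂s₂ ≤ ∂c/∂s₁. -/
open MeasureTheory Matrix Real

noncomputable section

/-- The normalizing constant as a function of the three diagonal parameters: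
`c(s₁,s₂,s₃) = ∫_{SO(3)} exp(s₁Q₁₁ + s₂Q₂₂ + s₃Q₃₃) dQ`. -/
noncomputable def cFun (μ : Measure M3) (s : Fin 3 → ℝ) : ℝ :=
  ∫ Q, Real.exp (s 0 * Q 0 0 + s 1 * Q 1 1 + s 2 * Q 2 2) ∂μ

section ExpIntegral

variable {α E : Type*} [MeasurableSpace α] [NormedAddCommGroup E] [NormedSpace ℝ E]
  {ν : Measure α} [IsFiniteMeasure ν] {L : α → StrongDual ℝ E} {C : ℝ}

theorem ContinuousLinearMap.apply_le_mul_of_norm_le {f : StrongDual ℝ E} (hf : ‖f‖ ≤ C) {t : E}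
    {R : ℝ} (ht : ‖t‖ ≤ R) : f t ≤ C * R :=
  calc f t ≤ ‖f t‖ := le_abs_self _
    _ ≤ ‖f‖ * ‖t‖ := f.le_opNorm t
    _ ≤ C * R := mul_le_mul hf ht (norm_nonneg t) ((norm_nonneg f).trans hf)

theorem integrable_exp_apply (hL : AEStronglyMeasurable L ν) (hC : ∀ᵐ a ∂ν, ‖L a‖ ≤ C) (t : E) :
    Integrable (fun a => exp (L a t)) ν := by
  refine .of_bound (continuous_exp.comp_aestronglyMeasurable (hL.apply_continuousLinearMap t))
    (exp (C * ‖t‖)) ?_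
  filter_upwards [hC] with a ha
  rw [norm_of_nonneg (exp_pos _).le]
  exact exp_le_exp.mpr (ContinuousLinearMap.apply_le_mul_of_norm_le ha le_rfl)

theorem integrable_exp_apply_smul (hL : AEStronglyMeasurable L ν) (hC : ∀ᵐ a ∂ν, ‖L a‖ ≤ C)
    (t : E) : Integrable (fun a => exp (L a t) • L a) ν := by
  refine .of_bound ((continuous_exp.comp_aestronglyMeasurable
    (hL.apply_continuousLinearMap t)).smul hL) (exp (C * ‖t‖) * C) ?_
  filter_upwards [hC] with a ha
  rw [norm_smul, norm_of_nonneg (exp_pos _).le]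
  exact mul_le_mul (exp_le_exp.mpr (ContinuousLinearMap.apply_le_mul_of_norm_le ha le_rfl)) ha
    (norm_nonneg _) (exp_pos _).le

theorem integrable_apply_mul_exp (hL : AEStronglyMeasurable L ν) (hC : ∀ᵐ a ∂ν, ‖L a‖ ≤ C)
    (v s : E) : Integrable (fun a => L a v * exp (L a s)) ν := by
  simpa only [_root_.smul_apply, smul_eq_mul, mul_comm] using
    (integrable_exp_apply_smul hL hC s).apply_continuousLinearMap v

theorem hasFDerivAt_integral_exp (hL : AEStronglyMeasurable L ν) (hC : ∀ᵐ a ∂ν, ‖L a‖ ≤ C)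
    (s : E) : HasFDerivAt (fun t => ∫ a, exp (L a t) ∂ν) (∫ a, exp (L a s) • L a ∂ν) s := by
  refine hasFDerivAt_integral_of_dominated_of_fderiv_le
    (bound := fun _ => exp (C * (‖s‖ + 1)) * C) (Metric.ball_mem_nhds s one_pos)
    (.of_forall fun t => (integrable_exp_apply hL hC t).aestronglyMeasurable)
    (integrable_exp_apply hL hC s) (integrable_exp_apply_smul hL hC s).aestronglyMeasurable
    ?_ (integrable_const _) (.of_forall fun a t _ => (L a).hasFDerivAt.exp)
  filter_upwards [hC] with a ha t ht
  have hts : ‖t‖ ≤ ‖s‖ + 1 := by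
    linarith [norm_le_norm_add_norm_sub' t s, mem_ball_iff_norm.mp ht]
  rw [norm_smul, norm_of_nonneg (exp_pos _).le]
  exact mul_le_mul (exp_le_exp.mpr (ContinuousLinearMap.apply_le_mul_of_norm_le ha hts)) ha
    (norm_nonneg _) (exp_pos _).le

theorem fderiv_integral_exp_apply (hL : AEStronglyMeasurable L ν) (hC : ∀ᵐ a ∂ν, ‖L a‖ ≤ C)
    (s v : E) :
    fderiv ℝ (fun t => ∫ a, exp (L a t) ∂ν) s v = ∫ a, L a v * exp (L a s) ∂ν := by
  rw [(hasFDerivAt_integral_exp hL hC s).fderiv,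
    ContinuousLinearMap.integral_apply (integrable_exp_apply_smul hL hC s)]
  simp only [_root_.smul_apply, smul_eq_mul, mul_comm]

end ExpIntegral

theorem mul_exp_sub_exp_sub_mul_nonneg {c : ℝ} (hc : 0 ≤ c) (u b : ℝ) :
    0 ≤ u * (exp b - exp (b - u * c)) := by
  rcases le_total 0 u with hu | hu
  · exact mul_nonneg hu (sub_nonneg.mpr (exp_le_exp.mpr (by nlinarith)))
  · exact mul_nonneg_of_nonpos_of_nonpos hu (sub_nonpos.mpr (exp_le_exp.mpr (by nlinarith)))

theorem integral_mul_exp_nonneg_of_reflection {α ι : Type*} [MeasurableSpace α] [Fintype ι]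
    {ν : Measure α} {σ : α → α} (hσ : MeasurePreserving σ ν ν) {X : α → ι → ℝ} {v s : ι → ℝ}
    (hv : v ⬝ᵥ v = 2) (hX : ∀ a, X (σ a) = X a - (X a ⬝ᵥ v) • v) (hs : 0 ≤ v ⬝ᵥ s)
    (hint : Integrable (fun a => X a ⬝ᵥ v * exp (X a ⬝ᵥ s)) ν) :
    0 ≤ ∫ a, X a ⬝ᵥ v * exp (X a ⬝ᵥ s) ∂ν := by
  set g := fun a => X a ⬝ᵥ v * exp (X a ⬝ᵥ s)
  have hg_σ : ∀ a, g (σ a) = -(X a ⬝ᵥ v) * exp (X a ⬝ᵥ s - X a ⬝ᵥ v * (v ⬝ᵥ s)) := by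
    intro a
    simp only [g, hX, sub_dotProduct, smul_dotProduct, smul_eq_mul, hv]
    ring_nf
  have hσ_int : ∫ a, g (σ a) ∂ν = ∫ a, g a ∂ν := by
    rw [← integral_map hσ.measurable.aemeasurable (hσ.map_eq.symm ▸ hint.aestronglyMeasurable),
      hσ.map_eq]
  have hsum : 0 ≤ ∫ a, (g a + g (σ a)) ∂ν := integral_nonneg fun a => by
    rw [hg_σ, neg_mul, ← sub_eq_add_neg, ← mul_sub]
    exact mul_exp_sub_exp_sub_mul_nonneg hs _ _
  have hint_σ : Integrable (fun a => g (σ a)) ν := hσ.integrable_comp_of_integrable hint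
  rw [integral_add hint hint_σ, hσ_int] at hsum
  linarith

theorem single_add_smul_single_dotProduct {ι : Type*} [Fintype ι] [DecidableEq ι] (i j : ι)
    (ε : ℝ) (t : ι → ℝ) :
    (Pi.single i 1 + ε • Pi.single j 1) ⬝ᵥ t = t i + ε * t j := by
  simp [add_dotProduct, smul_dotProduct]

theorem single_add_smul_single_dotProduct_self {ι : Type*} [Fintype ι] [DecidableEq ι] {i j : ι}
    (hij : i ≠ j) {ε : ℝ} (hε : ε = 1 ∨ ε = -1) :
    (Pi.single i 1 + ε • Pi.single j 1) ⬝ᵥ (Pi.single i 1 + ε • Pi.single j 1 : ι → ℝ) = 2 := by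
  rw [single_add_smul_single_dotProduct]
  rcases hε with rfl | rfl <;> simp [hij, hij.symm] <;> norm_num

def dotProductCLM (ι : Type*) [Fintype ι] [DecidableEq ι] :
    (ι → ℝ) →L[ℝ] StrongDual ℝ (ι → ℝ) :=
  LinearMap.toContinuousLinearMap
    ((LinearMap.toContinuousLinearMap :
      Module.Dual ℝ (ι → ℝ) ≃ₗ[ℝ] StrongDual ℝ (ι → ℝ)).toLinearMap
      ∘ₗ (dotProductEquiv ℝ ι).toLinearMap)

@[simp]
theorem dotProductCLM_apply {ι : Type*} [Fintype ι] [DecidableEq ι] (x t : ι → ℝ) :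
    dotProductCLM ι x t = x ⬝ᵥ t := rfl

/-- The rotation by `π` about the axis `u`, when `u ⬝ᵥ u = 2`. -/
def halfTurn (u : Fin 3 → ℝ) : M3 := vecMulVec u u - 1

theorem halfTurn_mem_SO3 {u : Fin 3 → ℝ} (hu : u ⬝ᵥ u = 2) : halfTurn u ∈ SO3 := by
  refine ⟨?_, ?_⟩
  · rw [halfTurn, transpose_sub, transpose_vecMulVec, transpose_one, sub_mul, mul_sub, mul_sub,
      vecMulVec_mul_vecMulVec, hu, Matrix.mul_one, Matrix.one_mul, mul_one, vecMulVec_smul]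
    module
  · have : halfTurn u = -(1 + replicateCol Unit (-u) * replicateRow Unit u) := by
      rw [halfTurn, ← vecMulVec_eq, neg_vecMulVec]
      abel
    rw [this, det_neg, det_one_add_replicateCol_mul_replicateRow, dotProduct_neg, hu]
    norm_num

theorem diag_halfTurn_mul_mul_halfTurn {i j : Fin 3} (hij : i ≠ j) {ε : ℝ}
    (hε : ε = 1 ∨ ε = -1) (Q : M3) :
    (halfTurn (Pi.single i 1 + (-ε) • Pi.single j 1) * Q *
        halfTurn (Pi.single i 1 + Pi.single j 1)).diag =
      Q.diag - (Q.diag ⬝ᵥ (Pi.single i 1 + ε • Pi.single j 1)) •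
        (Pi.single i 1 + ε • Pi.single j 1) := by
  ext m
  rcases hε with rfl | rfl <;> fin_cases i <;> fin_cases j <;> fin_cases m <;>
    simp_all [halfTurn, vecMulVec, mul_apply, Fin.sum_univ_three, dotProduct, Pi.single_apply]

theorem norm_diag_le_one_of_mem_SO3 {Q : M3} (hQ : Q ∈ SO3) : ‖Q.diag‖ ≤ 1 := by
  have hU : Q ∈ unitaryGroup (Fin 3) ℝ := by
    rw [mem_unitaryGroup_iff', star_eq_conjTranspose, conjTranspose_eq_transpose_of_trivial]
    exact hQ.1
  exact (pi_norm_le_iff_of_nonneg zero_le_one).mpr fun i => entry_norm_bound_of_unitary hU i i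

theorem measurePreserving_mul_mul {μ : Measure M3}
    (hleft : ∀ Q ∈ SO3, μ.map (fun R => Q * R) = μ)
    (hright : ∀ Q ∈ SO3, μ.map (fun R => R * Q) = μ) {A B : M3} (hA : A ∈ SO3)
    (hB : B ∈ SO3) : MeasurePreserving (fun Q => A * Q * B) μ μ := by
  have hmulA : Measurable fun Q : M3 => A * Q :=
    (continuous_const.matrix_mul continuous_id).measurable
  have hmulB : Measurable fun Q : M3 => Q * B :=
    (continuous_id.matrix_mul continuous_const).measurable
  refine ⟨hmulB.comp hmulA, ?_⟩
  rw [← Function.comp_def (fun Q => Q * B) (fun Q => A * Q), ← Measure.map_map hmulB hmulA,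
    hleft A hA, hright B hB]

section cFun

variable {μ : Measure M3}

theorem cFun_eq_integral_exp :
    cFun μ = fun t => ∫ Q, exp (dotProductCLM (Fin 3) Q.diag t) ∂μ := by
  ext t
  simp [cFun, dotProduct, Fin.sum_univ_three, mul_comm]

theorem aestronglyMeasurable_dotProductCLM_diag :
    AEStronglyMeasurable (fun Q : M3 => dotProductCLM (Fin 3) Q.diag) μ :=
  ((dotProductCLM (Fin 3)).continuous.comp continuous_id.matrix_diag).aestronglyMeasurable

theorem ae_norm_dotProductCLM_diag_le (hsupp : μ SO3ᶜ = 0) :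
    ∀ᵐ Q ∂μ, ‖dotProductCLM (Fin 3) Q.diag‖ ≤ ‖dotProductCLM (Fin 3)‖ := by
  filter_upwards [measure_eq_zero_iff_ae_notMem.mp hsupp] with Q hQ
  simpa using (dotProductCLM (Fin 3)).le_of_opNorm_le le_rfl Q.diag |>.trans
    (mul_le_of_le_one_right (norm_nonneg _) (norm_diag_le_one_of_mem_SO3 (not_not.mp hQ)))

variable [IsFiniteMeasure μ]

theorem differentiableAt_cFun (hsupp : μ SO3ᶜ = 0) (s : Fin 3 → ℝ) :
    DifferentiableAt ℝ (cFun μ) s := by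
  rw [cFun_eq_integral_exp]
  exact (hasFDerivAt_integral_exp aestronglyMeasurable_dotProductCLM_diag
    (ae_norm_dotProductCLM_diag_le hsupp) s).differentiableAt

theorem fderiv_cFun_apply (hsupp : μ SO3ᶜ = 0) (s v : Fin 3 → ℝ) :
    fderiv ℝ (cFun μ) s v = ∫ Q, Q.diag ⬝ᵥ v * exp (Q.diag ⬝ᵥ s) ∂μ := by
  rw [cFun_eq_integral_exp]
  exact fderiv_integral_exp_apply aestronglyMeasurable_dotProductCLM_diag
    (ae_norm_dotProductCLM_diag_le hsupp) s v

theorem fderiv_cFun_single_add_smul_nonneg (hsupp : μ SO3ᶜ = 0)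
    (hleft : ∀ Q ∈ SO3, μ.map (fun R => Q * R) = μ)
    (hright : ∀ Q ∈ SO3, μ.map (fun R => R * Q) = μ) {i j : Fin 3} (hij : i ≠ j) {ε : ℝ}
    (hε : ε = 1 ∨ ε = -1) {s : Fin 3 → ℝ} (hs : 0 ≤ s i + ε * s j) :
    0 ≤ fderiv ℝ (cFun μ) s (Pi.single i 1) + ε * fderiv ℝ (cFun μ) s (Pi.single j 1) := by
  rw [← smul_eq_mul, ← map_smul, ← map_add, fderiv_cFun_apply hsupp]
  have hA : halfTurn (Pi.single i 1 + (-ε) • Pi.single j 1) ∈ SO3 :=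
    halfTurn_mem_SO3 <| single_add_smul_single_dotProduct_self hij <| by
      rcases hε with rfl | rfl <;> simp
  have hB : halfTurn (Pi.single i 1 + Pi.single j 1) ∈ SO3 :=
    halfTurn_mem_SO3 (by simpa using single_add_smul_single_dotProduct_self hij (Or.inl rfl))
  exact integral_mul_exp_nonneg_of_reflection (measurePreserving_mul_mul hleft hright hA hB)
    (single_add_smul_single_dotProduct_self hij hε) (diag_halfTurn_mul_mul_halfTurn hij hε)
    (by rwa [single_add_smul_single_dotProduct])
    (integrable_apply_mul_exp aestronglyMeasurable_dotProductCLM_diag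
      (ae_norm_dotProductCLM_diag_le hsupp) _ s)

end cFun

/-- For `s₁ ≥ s₂ ≥ |s₃| ≥ 0`, the function
`c(s₁,s₂,s₃) = ∫_{SO(3)} exp(s₁Q₁₁+s₂Q₂₂+s₃Q₃₃) dQ` (integral with respect to the
Haar probability measure on SO(3)) is differentiable and its partial derivatives
satisfy (a) `∂c/∂sᵢ + ∂c/∂sⱼ ≥ 0` for every cyclic shift `(i,j,k)` of `(1,2,3)`, and
(b) `0 ≤ |∂c/∂s₃| ≤ ∂c/∂s₂ ≤ ∂c/∂s₁`. -/
theorem matrixFisher_normalizing_deriv_ineq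
    (μ : Measure M3) [IsProbabilityMeasure μ] (hsupp : μ SO3ᶜ = 0)
    (hleft : ∀ Q ∈ SO3, μ.map (fun R => Q * R) = μ)
    (hright : ∀ Q ∈ SO3, μ.map (fun R => R * Q) = μ)
    (s₁ s₂ s₃ : ℝ) (h12 : s₁ ≥ s₂) (h23 : s₂ ≥ |s₃|) :
    DifferentiableAt ℝ (cFun μ) ![s₁, s₂, s₃] ∧
    (∀ i j k : Fin 3,
      ((i, j, k) ∈ ({(0, 1, 2), (1, 2, 0), (2, 0, 1)} : Set (Fin 3 × Fin 3 × Fin 3))) →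
      0 ≤ fderiv ℝ (cFun μ) ![s₁, s₂, s₃] (Pi.single i 1) +
          fderiv ℝ (cFun μ) ![s₁, s₂, s₃] (Pi.single j 1)) ∧
    (0 ≤ |fderiv ℝ (cFun μ) ![s₁, s₂, s₃] (Pi.single 2 1)| ∧
      |fderiv ℝ (cFun μ) ![s₁, s₂, s₃] (Pi.single 2 1)| ≤
        fderiv ℝ (cFun μ) ![s₁, s₂, s₃] (Pi.single 1 1) ∧
      fderiv ℝ (cFun μ) ![s₁, s₂, s₃] (Pi.single 1 1) ≤
        fderiv ℝ (cFun μ) ![s₁, s₂, s₃] (Pi.single 0 1)) := by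
  have := neg_abs_le s₃
  have := le_abs_self s₃
  have hcomb (i j : Fin 3) (hij : i ≠ j) (ε : ℝ) (hε : ε = 1 ∨ ε = -1)
      (hs : 0 ≤ ![s₁, s₂, s₃] i + ε * ![s₁, s₂, s₃] j) :=
    fderiv_cFun_single_add_smul_nonneg hsupp hleft hright hij hε hs
  refine ⟨differentiableAt_cFun hsupp _, ?_, abs_nonneg _, abs_le.mpr ⟨?_, ?_⟩, ?_⟩
  · rintro i j k (⟨rfl, rfl, rfl⟩ | ⟨rfl, rfl, rfl⟩ | ⟨rfl, rfl, rfl⟩) <;>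
      simpa using hcomb _ _ (by decide) 1 (Or.inl rfl) (by simp; linarith)
  · linarith [hcomb 1 2 (by decide) 1 (Or.inl rfl) (by simp; linarith)]
  · linarith [hcomb 1 2 (by decide) (-1) (Or.inr rfl) (by simp; linarith)]
  · linarith [hcomb 0 1 (by decide) (-1) (Or.inr rfl) (by simp; linarith)]

end
end

section
/- Let S = diag[s₁,s₂,s₃] be a real diagonal 3×3 matrix, a = (a₁,a₂,a₃) ∈ ℝ³ a unit vector, and θ ∈ ℝ. Then tr(S · exp(θ â)) = tr(S) − (1 − cos θ)·[(s₁+s₂)a₃² + (s₂+s₃)a₁² + (s₃+s₁)a₂²], where exp denotes the matrix exponential. -/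
open Matrix Real

noncomputable section

/-- The hat map: the skew-symmetric matrix `x̂` satisfying `x̂ y = x × y`. -/
def hat (x₁ x₂ x₃ : ℝ) : M3 :=
  !![0, -x₃, x₂; x₃, 0, -x₁; -x₂, x₁, 0]

/-!
For a unit vector `a` one has `â³ = -â`, so the powers of `θ â` collapse onto `â` and `â²` and
the exponential series sums to Rodrigues' formula `exp (θ â) = 1 + sin θ • â + (1 - cos θ) • â²`.
Taking the trace against the diagonal `S`, the `sin θ` term drops out because `â` has zero
diagonal, and `â² = a aᵀ - |a|² I` gives the bracket.
-/

section PowThreeEqNeg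

variable {R : Type*} [Ring R] {A : R}

theorem pow_two_mul_add_one_of_pow_three_eq_neg (hA : A ^ 3 = -A) (k : ℕ) :
    A ^ (2 * k + 1) = (-1) ^ k * A := by
  induction k with
  | zero => simp
  | succ k ih =>
    rw [show 2 * (k + 1) + 1 = 2 * k + 1 + 2 by ring, pow_add, ih, mul_assoc, ← pow_succ', hA,
      pow_succ, mul_neg, mul_neg_one, neg_mul]

theorem pow_two_mul_add_two_of_pow_three_eq_neg (hA : A ^ 3 = -A) (k : ℕ) :
    A ^ (2 * k + 2) = (-1) ^ k * A ^ 2 := by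
  rw [pow_succ, pow_two_mul_add_one_of_pow_three_eq_neg hA, mul_assoc, ← sq]

end PowThreeEqNeg

section Rodrigues

variable {𝔸 : Type*} [Ring 𝔸] [Algebra ℝ 𝔸] [TopologicalSpace 𝔸] [IsTopologicalRing 𝔸]
  [ContinuousSMul ℝ 𝔸] [T2Space 𝔸] {A : 𝔸}

theorem exp_smul_of_pow_three_eq_neg (hA : A ^ 3 = -A) (θ : ℝ) :
    NormedSpace.exp (θ • A) = 1 + sin θ • A + (1 - cos θ) • A ^ 2 := by
  rw [NormedSpace.exp_eq_tsum ℝ]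
  refine HasSum.tsum_eq ?_
  simp_rw [smul_pow, smul_smul]
  have neg_one_pow_mul (k : ℕ) (B : 𝔸) : (-1 : 𝔸) ^ k * B = ((-1 : ℝ) ^ k) • B := by
    simp [Algebra.smul_def]
  have heven : HasSum (fun k ↦ (((2 * k).factorial : ℝ)⁻¹ * θ ^ (2 * k)) • A ^ (2 * k))
      (1 + (1 - cos θ) • A ^ 2) := by
    -- the even terms are those of `cos θ • -A ^ 2`, except at `k = 0` where `A ^ 0 = 1`
    convert ((hasSum_cos θ).smul_const (-A ^ 2)).add (hasSum_ite_eq 0 (1 + A ^ 2)) using 1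
    · ext (_ | k)
      · simp
      · rw [mul_add_one, pow_two_mul_add_two_of_pow_three_eq_neg hA, neg_one_pow_mul, smul_smul]
        simp only [add_eq_zero, one_ne_zero, and_false, if_false, add_zero, smul_neg, ← neg_smul]
        congr 1
        ring
    · rw [sub_smul, one_smul, smul_neg]
      abel
  have hodd : HasSum (fun k ↦ (((2 * k + 1).factorial : ℝ)⁻¹ * θ ^ (2 * k + 1)) • A ^ (2 * k + 1))
      (sin θ • A) := by
    convert (hasSum_sin θ).smul_const A using 1
    ext k
    rw [pow_two_mul_add_one_of_pow_three_eq_neg hA, neg_one_pow_mul, smul_smul]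
    congr 1
    ring
  rw [add_right_comm]
  exact HasSum.even_add_odd (f := fun n ↦ ((n.factorial : ℝ)⁻¹ * θ ^ n) • A ^ n) heven hodd

end Rodrigues

theorem hat_sq (a₁ a₂ a₃ : ℝ) :
    hat a₁ a₂ a₃ ^ 2 =
      !![-(a₂ ^ 2 + a₃ ^ 2), a₁ * a₂, a₁ * a₃;
         a₁ * a₂, -(a₁ ^ 2 + a₃ ^ 2), a₂ * a₃;
         a₁ * a₃, a₂ * a₃, -(a₁ ^ 2 + a₂ ^ 2)] := by
  rw [sq, hat, mul_fin_three]
  ring_nf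

theorem hat_pow_three (a₁ a₂ a₃ : ℝ) :
    hat a₁ a₂ a₃ ^ 3 = -(a₁ ^ 2 + a₂ ^ 2 + a₃ ^ 2) • hat a₁ a₂ a₃ := by
  rw [pow_succ, hat_sq, hat, mul_fin_three, smul_of]
  simp only [smul_vec3, smul_eq_mul]
  ring_nf

theorem trace_diagonal_mul_hat (s : Fin 3 → ℝ) (a₁ a₂ a₃ : ℝ) :
    (diagonal s * hat a₁ a₂ a₃).trace = 0 := by
  rw [diagonal_fin_three, hat, mul_fin_three, trace_fin_three_of]
  ring

theorem trace_diagonal_mul_hat_sq (s₁ s₂ s₃ a₁ a₂ a₃ : ℝ) :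
    (diagonal ![s₁, s₂, s₃] * hat a₁ a₂ a₃ ^ 2).trace =
      -((s₁ + s₂) * a₃ ^ 2 + (s₂ + s₃) * a₁ ^ 2 + (s₃ + s₁) * a₂ ^ 2) := by
  rw [hat_sq, diagonal_vec3, mul_fin_three, trace_fin_three_of]
  ring

/-- Let `S = diag[s₁,s₂,s₃]` be a real diagonal 3×3 matrix,
`a = (a₁,a₂,a₃)` a unit vector in ℝ³, and `θ ∈ ℝ`.  Then
`tr(S·exp(θ â)) = tr(S) − (1−cos θ)·[(s₁+s₂)a₃² + (s₂+s₃)a₁² + (s₃+s₁)a₂²]`,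
where `exp` is the matrix exponential. -/
theorem trace_diagonal_mul_exp_hat
    (s₁ s₂ s₃ a₁ a₂ a₃ θ : ℝ) (ha : a₁ ^ 2 + a₂ ^ 2 + a₃ ^ 2 = 1) :
    (Matrix.diagonal ![s₁, s₂, s₃] * NormedSpace.exp (θ • hat a₁ a₂ a₃)).trace =
      (Matrix.diagonal ![s₁, s₂, s₃]).trace -
        (1 - Real.cos θ) *
          ((s₁ + s₂) * a₃ ^ 2 + (s₂ + s₃) * a₁ ^ 2 + (s₃ + s₁) * a₂ ^ 2) := by
  have hA : hat a₁ a₂ a₃ ^ 3 = -hat a₁ a₂ a₃ := by rw [hat_pow_three, ha, neg_one_smul]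
  rw [exp_smul_of_pow_three_eq_neg hA, mul_add, mul_add, mul_one, mul_smul_comm, mul_smul_comm,
    trace_add, trace_add, trace_smul, trace_smul, trace_diagonal_mul_hat,
    trace_diagonal_mul_hat_sq, smul_eq_mul, smul_eq_mul]
  ring

end
end

section
/- Let F ∈ ℝ^{3×3} have proper singular value decomposition F = USVᵀ with S = diag[s₁,s₂,s₃], s₁ ≥ s₂ ≥ |s₃| ≥ 0. Then for every R ∈ SO(3), tr(Fᵀ R) ≤ s₁ + s₂ + s₃, with equality attained at R = UVᵀ. Consequently, the matrix Fisher density p(R) = exp(tr(FᵀR))/c(F) attains its maximum over SO(3) at R = UVᵀ. -/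
open MeasureTheory Matrix Real

noncomputable section

/-! For a rotation `Q`, `tr(diag S · Q) = s₁ Q₀₀ + s₂ Q₁₁ + s₃ Q₂₂`, and the diagonal of `Q` lies in
the tetrahedron with vertices `(1,1,1), (1,-1,-1), (-1,1,-1), (-1,-1,1)`: each `Qᵢᵢ ≤ 1`,
`tr Q ≥ -1`, and `Q₀₀ + Q₁₁ - Q₂₂ ≤ 1` (the trace bound for `Q · diag(-1,-1,1)`).
For `s₁ ≥ s₂ ≥ |s₃|` the linear form `s₁ x + s₂ y + s₃ z` is maximal on that tetrahedron at
`(1,1,1)`, which is the diagonal of `Q = 1`, i.e. of `R = U Vᵀ`. -/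

theorem trace_transpose_mul_eq_sum {n : Type*} [Fintype n] [DecidableEq n] {K : Type*}
    [CommRing K] (U V R : Matrix n n K) (d : n → K) :
    ((U * diagonal d * Vᵀ)ᵀ * R).trace = ∑ i, d i * (Uᵀ * R * V) i i := by
  rw [transpose_mul, transpose_mul, transpose_transpose, diagonal_transpose,
    Matrix.mul_assoc, trace_mul_comm, Matrix.mul_assoc]
  simp only [trace, diag, diagonal_mul, Matrix.mul_assoc]

namespace SO3

variable {Q : M3}

theorem mul_mem {A B : M3} (hA : A ∈ SO3) (hB : B ∈ SO3) : A * B ∈ SO3 := by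
  refine ⟨?_, by rw [det_mul, hA.2, hB.2, mul_one]⟩
  rw [transpose_mul, Matrix.mul_assoc, ← Matrix.mul_assoc Aᵀ, hA.1, Matrix.one_mul, hB.1]

theorem transpose_mem (hQ : Q ∈ SO3) : Qᵀ ∈ SO3 :=
  ⟨by rw [transpose_transpose]; exact mul_eq_one_comm.mpr hQ.1, by rw [det_transpose]; exact hQ.2⟩

theorem diagonal_neg_one_neg_one_one_mem : diagonal ![(-1 : ℝ), -1, 1] ∈ SO3 := by
  refine ⟨?_, by simp [det_diagonal, Fin.prod_univ_three]⟩
  rw [diagonal_transpose, diagonal_mul_diagonal]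
  ext i j
  fin_cases i <;> fin_cases j <;> simp

theorem apply_self_le_one (hQ : Q ∈ SO3) (i : Fin 3) : Q i i ≤ 1 := by
  have hcol : ∑ k, Q k i ^ 2 = 1 := by
    simpa [mul_apply, sq] using congr_fun (congr_fun hQ.1 i) i
  have hsq : Q i i ^ 2 ≤ 1 :=
    hcol ▸ Finset.single_le_sum (fun k _ => sq_nonneg (Q k i)) (Finset.mem_univ i)
  exact le_of_abs_le ((sq_le_one_iff_abs_le_one _).mp hsq)

/-- `Q - Qᵀ` is `2 sin θ` times the cross-product matrix of the unit axis, and `tr Q = 1 + 2 cos θ`;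
this is the polynomial form of `4 sin² θ = (3 - tr Q)(1 + tr Q)`. -/
theorem skew_sq_sum (hQ : Q ∈ SO3) :
    (Q 1 2 - Q 2 1) ^ 2 + (Q 2 0 - Q 0 2) ^ 2 + (Q 0 1 - Q 1 0) ^ 2 =
      (3 - Q.trace) * (1 + Q.trace) := by
  have hadj : Qᵀ = adjugate Q := by
    rw [← inv_eq_left_inv hQ.1, inv_def, hQ.2]
    simp
  have hrow : Q * Qᵀ = 1 := mul_eq_one_comm.mpr hQ.1
  have r0 := congr_fun (congr_fun hrow 0) 0
  have r1 := congr_fun (congr_fun hrow 1) 1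
  have r2 := congr_fun (congr_fun hrow 2) 2
  have c0 := congr_fun (congr_fun hadj 0) 0
  have c1 := congr_fun (congr_fun hadj 1) 1
  have c2 := congr_fun (congr_fun hadj 2) 2
  simp only [mul_apply, transpose_apply, one_apply_eq, Fin.sum_univ_three] at r0 r1 r2
  simp [adjugate_fin_three] at c0 c1 c2
  rw [trace_fin_three]
  linear_combination r0 + r1 + r2 - 2 * (c0 + c1 + c2)

theorem neg_one_le_trace (hQ : Q ∈ SO3) : -1 ≤ Q.trace := by
  have htr : Q.trace ≤ 3 := by
    rw [trace_fin_three]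
    linarith [apply_self_le_one hQ 0, apply_self_le_one hQ 1, apply_self_le_one hQ 2]
  nlinarith [skew_sq_sum hQ, sq_nonneg (Q 1 2 - Q 2 1), sq_nonneg (Q 2 0 - Q 0 2),
    sq_nonneg (Q 0 1 - Q 1 0)]

theorem add_sub_le_one (hQ : Q ∈ SO3) : Q 0 0 + Q 1 1 - Q 2 2 ≤ 1 := by
  have h := neg_one_le_trace (mul_mem hQ diagonal_neg_one_neg_one_one_mem)
  simp [trace_fin_three, mul_diagonal] at h
  linarith

theorem weighted_diag_le (hQ : Q ∈ SO3) {s₁ s₂ s₃ : ℝ} (h12 : s₁ ≥ s₂) (h23 : s₂ ≥ |s₃|) :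
    s₁ * Q 0 0 + s₂ * Q 1 1 + s₃ * Q 2 2 ≤ s₁ + s₂ + s₃ := by
  have h00 := apply_self_le_one hQ 0
  have h11 := apply_self_le_one hQ 1
  have h22 := apply_self_le_one hQ 2
  have htr := neg_one_le_trace hQ
  rw [trace_fin_three] at htr
  have hflip := add_sub_le_one hQ
  obtain ⟨hs₃_lower, hs₃_upper⟩ := abs_le.mp h23
  rcases le_or_gt 0 s₃ with hs₃ | hs₃
  · linarith [mul_nonneg (sub_nonneg.2 h12) (sub_nonneg.2 h00),
      mul_nonneg (sub_nonneg.2 hs₃_upper) (by linarith : (0 : ℝ) ≤ 2 - Q 0 0 - Q 1 1),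
      mul_nonneg hs₃ (by linarith : (0 : ℝ) ≤ 3 - (Q 0 0 + Q 1 1 + Q 2 2))]
  · linarith [mul_nonneg (sub_nonneg.2 h12) (sub_nonneg.2 h00),
      mul_nonneg (by linarith : (0 : ℝ) ≤ s₂ + s₃) (by linarith : (0 : ℝ) ≤ 2 - Q 0 0 - Q 1 1),
      mul_nonneg (by linarith : (0 : ℝ) ≤ -s₃) (by linarith : (0 : ℝ) ≤ 1 - (Q 0 0 + Q 1 1 - Q 2 2))]

end SO3

theorem matrixFisher_density_max_general
    (μ : Measure M3)
    (F U V : M3) (s₁ s₂ s₃ : ℝ)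
    (hU : U ∈ SO3) (hV : V ∈ SO3) (h12 : s₁ ≥ s₂) (h23 : s₂ ≥ |s₃|)
    (hF : F = U * Matrix.diagonal ![s₁, s₂, s₃] * Vᵀ) :
    (∀ R ∈ SO3, (Fᵀ * R).trace ≤ s₁ + s₂ + s₃) ∧
    (Fᵀ * (U * Vᵀ)).trace = s₁ + s₂ + s₃ ∧
    (∀ R ∈ SO3,
      Real.exp (Fᵀ * R).trace / mfC μ F ≤
        Real.exp (Fᵀ * (U * Vᵀ)).trace / mfC μ F) := by
  have htrace (R : M3) : (Fᵀ * R).trace =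
      s₁ * (Uᵀ * R * V) 0 0 + s₂ * (Uᵀ * R * V) 1 1 + s₃ * (Uᵀ * R * V) 2 2 := by
    rw [hF, trace_transpose_mul_eq_sum]
    simp [Fin.sum_univ_three]
  have hbound (R : M3) (hR : R ∈ SO3) : (Fᵀ * R).trace ≤ s₁ + s₂ + s₃ := by
    rw [htrace]
    exact SO3.weighted_diag_le (SO3.mul_mem (SO3.mul_mem (SO3.transpose_mem hU) hR) hV) h12 h23
  have hmax : (Fᵀ * (U * Vᵀ)).trace = s₁ + s₂ + s₃ := by
    rw [htrace, ← Matrix.mul_assoc, hU.1, Matrix.one_mul, hV.1]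
    simp
  refine ⟨hbound, hmax, fun R hR => ?_⟩
  have hc : 0 ≤ mfC μ F := integral_nonneg fun R => (Real.exp_pos _).le
  gcongr
  exact hmax ▸ hbound R hR

/-- Let `F = U S Vᵀ` be a proper singular value decomposition
(`U, V ∈ SO(3)`, `S = diag[s₁,s₂,s₃]`, `s₁ ≥ s₂ ≥ |s₃| ≥ 0`).  Then for every
`R ∈ SO(3)`, `tr(Fᵀ R) ≤ s₁ + s₂ + s₃`, with equality at `R = U Vᵀ`.
Consequently, the matrix Fisher density `p(R) = exp(tr(FᵀR))/c(F)` attains its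
maximum over SO(3) at `R = U Vᵀ`. -/
theorem matrixFisher_density_max
    (μ : Measure M3) [IsProbabilityMeasure μ] (hsupp : μ SO3ᶜ = 0)
    (hleft : ∀ Q ∈ SO3, μ.map (fun R => Q * R) = μ)
    (hright : ∀ Q ∈ SO3, μ.map (fun R => R * Q) = μ)
    (F U V : M3) (s₁ s₂ s₃ : ℝ)
    (hU : U ∈ SO3) (hV : V ∈ SO3) (h12 : s₁ ≥ s₂) (h23 : s₂ ≥ |s₃|)
    (hF : F = U * Matrix.diagonal ![s₁, s₂, s₃] * Vᵀ) :
    (∀ R ∈ SO3, (Fᵀ * R).trace ≤ s₁ + s₂ + s₃) ∧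
    (Fᵀ * (U * Vᵀ)).trace = s₁ + s₂ + s₃ ∧
    (∀ R ∈ SO3,
      Real.exp (Fᵀ * R).trace / mfC μ F ≤
        Real.exp (Fᵀ * (U * Vᵀ)).trace / mfC μ F) :=
  matrixFisher_density_max_general μ F U V s₁ s₂ s₃ hU hV h12 h23 hF

end
end

section
/- Let F ∈ ℝ^{3×3} have proper singular value decomposition F = USVᵀ, and let p(R̃) = exp(tr(FᵀR̃))/c(F) be the matrix Fisher density on SO(3). Then the minimum mean square error mean attitude is R = UVᵀ; that is, for every R ∈ SO(3), ∫_{SO(3)} ‖UVᵀ − R̃‖_F² p(R̃) dR̃ ≤ ∫_{SO(3)} ‖R − R̃‖_F² p(R̃) dR̃, where ‖A‖_F = √(tr(AᵀA)) denotes the Frobenius norm. -/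
open MeasureTheory Matrix Real

noncomputable section

/-- The squared Frobenius norm, `‖A‖_F² = tr(Aᵀ A)`. -/
noncomputable def frobSq (A : M3) : ℝ := (Aᵀ * A).trace

instance : PolishSpace M3 := inferInstanceAs (PolishSpace (Fin 3 → Fin 3 → ℝ))

lemma mul_transpose_of_mem_SO3 {A : M3} (hA : A ∈ SO3) : A * Aᵀ = 1 :=
  mul_eq_one_comm.mp hA.1

lemma transpose_mem_SO3 {A : M3} (hA : A ∈ SO3) : Aᵀ ∈ SO3 :=
  ⟨by rw [transpose_transpose, mul_transpose_of_mem_SO3 hA], by rw [det_transpose, hA.2]⟩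

lemma mul_mem_SO3 {A B : M3} (hA : A ∈ SO3) (hB : B ∈ SO3) : A * B ∈ SO3 :=
  ⟨by rw [transpose_mul, Matrix.mul_assoc, ← Matrix.mul_assoc Aᵀ, hA.1, Matrix.one_mul, hB.1],
    by rw [det_mul, hA.2, hB.2, mul_one]⟩

lemma one_mem_SO3 : (1 : M3) ∈ SO3 := ⟨by simp, by simp⟩

lemma diagonal_mem_SO3 {ε : Fin 3 → ℝ} (hsq : ∀ i, ε i * ε i = 1) (hprod : ∏ i, ε i = 1) :
    diagonal ε ∈ SO3 :=
  ⟨by rw [diagonal_transpose, diagonal_mul_diagonal, ← diagonal_one]; exact congrArg _ (funext hsq),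
    by rw [det_diagonal, hprod]⟩

def signFlip (j : Fin 3) : Fin 3 → ℝ := fun k => if k = j then 1 else -1

lemma signFlip_self (j : Fin 3) : signFlip j j = 1 := if_pos rfl

lemma signFlip_of_ne {j k : Fin 3} (h : k ≠ j) : signFlip j k = -1 := if_neg h

lemma diagonal_signFlip_mem_SO3 (j : Fin 3) : diagonal (signFlip j) ∈ SO3 :=
  diagonal_mem_SO3 (fun k => by unfold signFlip; split_ifs <;> norm_num)
    (by fin_cases j <;> simp [signFlip, Fin.prod_univ_three])

/-- The sign makes the permutation matrix a rotation; conjugation ignores it. -/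
def signedPermMatrix (σ : Equiv.Perm (Fin 3)) : M3 :=
  ((Equiv.Perm.sign σ : ℤ) : ℝ) • σ.permMatrix ℝ

lemma signedPermMatrix_mem_SO3 (σ : Equiv.Perm (Fin 3)) : signedPermMatrix σ ∈ SO3 := by
  refine ⟨?_, ?_⟩
  · rw [signedPermMatrix, transpose_smul, Matrix.smul_mul, Matrix.mul_smul, smul_smul,
      transpose_permMatrix, ← permMatrix_mul]
    rcases Int.units_eq_one_or (Equiv.Perm.sign σ) with h | h <;> norm_num [h]
  · rw [signedPermMatrix, det_smul, det_permutation]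
    rcases Int.units_eq_one_or (Equiv.Perm.sign σ) with h | h <;> norm_num [h]

lemma signedPermMatrix_mul_mul_transpose (σ : Equiv.Perm (Fin 3)) (R : M3) :
    signedPermMatrix σ * R * (signedPermMatrix σ)ᵀ = R.submatrix σ σ := by
  rw [signedPermMatrix, transpose_smul, Matrix.smul_mul, Matrix.smul_mul, Matrix.mul_smul,
    smul_smul, transpose_permMatrix, Equiv.Perm.permMatrix, Equiv.Perm.permMatrix,
    PEquiv.toMatrix_toPEquiv_mul, PEquiv.mul_toMatrix_toPEquiv]
  rcases Int.units_eq_one_or (Equiv.Perm.sign σ) with h | h <;> simp [h, Equiv.Perm.inv_def]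

lemma adjugate_eq_transpose_of_mem_SO3 {A : M3} (hA : A ∈ SO3) : A.adjugate = Aᵀ := by
  calc A.adjugate = Aᵀ * A * A.adjugate := by rw [hA.1, Matrix.one_mul]
    _ = Aᵀ := by rw [Matrix.mul_assoc, mul_adjugate, hA.2, one_smul, Matrix.mul_one]

/-- For a rotation by `θ` both sides equal `4 sin² θ`. -/
lemma one_add_trace_mul_three_sub_trace {A : M3} (hA : A ∈ SO3) :
    (1 + A.trace) * (3 - A.trace) =
      (A 2 1 - A 1 2) ^ 2 + (A 0 2 - A 2 0) ^ 2 + (A 1 0 - A 0 1) ^ 2 := by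
  have hadj := adjugate_eq_transpose_of_mem_SO3 hA
  rw [adjugate_fin_three] at hadj
  have h00 := congrFun (congrFun hadj 0) 0
  have h11 := congrFun (congrFun hadj 1) 1
  have h22 := congrFun (congrFun hadj 2) 2
  have hsq := congrArg trace hA.1
  simp only [of_apply, cons_val', cons_val_zero, cons_val_one, cons_val, cons_val_fin_one,
    transpose_apply, trace_fin_three, mul_apply, Fin.sum_univ_three, trace_one, Fintype.card_fin,
    Nat.cast_ofNat] at h00 h11 h22 hsq
  rw [trace_fin_three]
  linear_combination (-1 : ℝ) * hsq - 2 * h00 - 2 * h11 - 2 * h22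

lemma neg_one_le_trace_of_mem_SO3 {A : M3} (hA : A ∈ SO3) : -1 ≤ A.trace := by
  have h := one_add_trace_mul_three_sub_trace hA
  by_contra! hlt
  nlinarith [sq_nonneg (A 2 1 - A 1 2), sq_nonneg (A 0 2 - A 2 0), sq_nonneg (A 1 0 - A 0 1)]

lemma one_add_sum_signFlip_mul_diag_nonneg {Q : M3} (hQ : Q ∈ SO3) (k : Fin 3) :
    0 ≤ 1 + ∑ i, signFlip k i * Q i i := by
  have h := neg_one_le_trace_of_mem_SO3 (mul_mem_SO3 (diagonal_signFlip_mem_SO3 k) hQ)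
  simp only [trace, diag, diagonal_mul] at h
  linarith

lemma abs_apply_le_one_of_mem_SO3 {A : M3} (hA : A ∈ SO3) (i j : Fin 3) : |A i j| ≤ 1 := by
  have h := congrFun (congrFun hA.1 j) j
  simp only [mul_apply, transpose_apply, one_apply_eq] at h
  have hle : A i j * A i j ≤ ∑ k, A k j * A k j :=
    Finset.single_le_sum (fun k _ => mul_self_nonneg (A k j)) (Finset.mem_univ i)
  rw [← abs_mul_self, abs_mul] at hle
  nlinarith [abs_nonneg (A i j)]

lemma isCompact_SO3 : IsCompact SO3 := by
  have hclosed : IsClosed SO3 :=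
    (isClosed_eq (by fun_prop) continuous_const).inter (isClosed_eq (by fun_prop) continuous_const)
  exact (isCompact_univ_pi fun _ => isCompact_univ_pi fun _ => isCompact_Icc).of_isClosed_subset
    hclosed fun A hA i _ j _ => abs_le.mp (abs_apply_le_one_of_mem_SO3 hA i j)

lemma frobSq_sub_of_mem_SO3 {A B : M3} (hA : A ∈ SO3) (hB : B ∈ SO3) :
    frobSq (A - B) = 6 - 2 * (Aᵀ * B).trace := by
  have hBA : (Bᵀ * A).trace = (Aᵀ * B).trace := by
    rw [← trace_transpose, transpose_mul, transpose_transpose]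
  rw [frobSq, transpose_sub, sub_mul, mul_sub, mul_sub, hA.1, hB.1, trace_sub, trace_sub,
    trace_sub, hBA, trace_one, Fintype.card_fin, Nat.cast_ofNat]
  ring

lemma trace_transpose_mul_mul_mul_transpose (A U V Y : M3) :
    (Aᵀ * (U * Y * Vᵀ)).trace = ((Uᵀ * A * V)ᵀ * Y).trace := by
  rw [transpose_mul, transpose_mul, transpose_transpose, ← Matrix.mul_assoc, ← Matrix.mul_assoc,
    trace_mul_comm]
  simp only [Matrix.mul_assoc]

lemma trace_diagonal_transpose_mul (s : Fin 3 → ℝ) (Y : M3) :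
    ((diagonal s)ᵀ * Y).trace = ∑ i, s i * Y i i := by
  simp [trace, diagonal_mul]

structure IsBiInvariantSO3 (μ : Measure M3) : Prop where
  measure_compl_SO3 : μ SO3ᶜ = 0
  map_mul_left : ∀ Q ∈ SO3, μ.map (Q * ·) = μ
  map_mul_right : ∀ Q ∈ SO3, μ.map (· * Q) = μ

namespace IsBiInvariantSO3

variable {μ : Measure M3}

lemma ae_mem_SO3 (hμ : IsBiInvariantSO3 μ) : ∀ᵐ R ∂μ, R ∈ SO3 := hμ.measure_compl_SO3

lemma measurePreserving_mul_mul (hμ : IsBiInvariantSO3 μ) {A B : M3} (hA : A ∈ SO3)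
    (hB : B ∈ SO3) : MeasurePreserving (fun R => A * R * B) μ μ := by
  refine ⟨by fun_prop, ?_⟩
  rw [show (fun R => A * R * B) = (· * B) ∘ (A * ·) from rfl, ← Measure.map_map (by fun_prop)
    (by fun_prop), hμ.map_mul_left A hA, hμ.map_mul_right B hB]

lemma integral_mul_mul (hμ : IsBiInvariantSO3 μ) {A B : M3} (hA : A ∈ SO3) (hB : B ∈ SO3)
    (f : M3 → ℝ) : ∫ R, f (A * R * B) ∂μ = ∫ R, f R ∂μ := by
  refine (hμ.measurePreserving_mul_mul hA hB).integral_comp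
    ((by fun_prop : Continuous fun R : M3 => A * R * B).measurableEmbedding fun R R' h => ?_) f
  simpa [Matrix.mul_assoc, ← Matrix.mul_assoc Aᵀ, hA.1, mul_transpose_of_mem_SO3 hB] using
    congrArg (fun X => Aᵀ * X * Bᵀ) h

lemma integral_submatrix (hμ : IsBiInvariantSO3 μ) (σ : Equiv.Perm (Fin 3)) (f : M3 → ℝ) :
    ∫ R, f (R.submatrix σ σ) ∂μ = ∫ R, f R ∂μ := by
  simpa only [signedPermMatrix_mul_mul_transpose] using hμ.integral_mul_mul
    (signedPermMatrix_mem_SO3 σ) (transpose_mem_SO3 (signedPermMatrix_mem_SO3 σ)) f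

lemma integrable_of_continuous (hμ : IsBiInvariantSO3 μ) [IsFiniteMeasure μ] {f : M3 → ℝ}
    (hf : Continuous f) : Integrable f μ := by
  rw [← Measure.restrict_eq_self_of_ae_mem hμ.ae_mem_SO3]
  exact hf.continuousOn.integrableOn_compact isCompact_SO3

lemma integral_frobSq_sub_mul_sub (hμ : IsBiInvariantSO3 μ) [IsFiniteMeasure μ] {A B : M3}
    (hA : A ∈ SO3) (hB : B ∈ SO3) {g : M3 → ℝ} (hg : Continuous g) :
    ∫ X, frobSq (B - X) * g X ∂μ - ∫ X, frobSq (A - X) * g X ∂μ =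
      2 * ∫ X, ((A - B)ᵀ * X).trace * g X ∂μ := by
  rw [← integral_sub (hμ.integrable_of_continuous (by unfold frobSq; fun_prop))
    (hμ.integrable_of_continuous (by unfold frobSq; fun_prop)), ← integral_const_mul]
  refine integral_congr_ae (hμ.ae_mem_SO3.mono fun X hX => ?_)
  simp only [frobSq_sub_of_mem_SO3 hA hX, frobSq_sub_of_mem_SO3 hB hX, transpose_sub, sub_mul,
    trace_sub]
  ring

end IsBiInvariantSO3

/-- The matrix Fisher weight `exp tr(Sᵀ R)` for `S = diagonal s`. -/
def diagWeight (s : Fin 3 → ℝ) (R : M3) : ℝ := exp (∑ i, s i * R i i)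

def diagMoment (μ : Measure M3) (s : Fin 3 → ℝ) (i : Fin 3) : ℝ :=
  ∫ R, R i i * diagWeight s R ∂μ

@[fun_prop]
lemma continuous_diagWeight (s : Fin 3 → ℝ) : Continuous (diagWeight s) := by
  unfold diagWeight; fun_prop

lemma diagWeight_submatrix (s : Fin 3 → ℝ) (σ : Equiv.Perm (Fin 3)) (R : M3) :
    diagWeight (s ∘ σ) (R.submatrix σ σ) = diagWeight s R := by
  simp only [diagWeight, Function.comp_apply, submatrix_apply]
  rw [Equiv.sum_comp σ (fun i => s i * R i i)]

lemma diagWeight_diagonal_mul (s ε : Fin 3 → ℝ) (R : M3) :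
    diagWeight s (diagonal ε * R) = diagWeight (s * ε) R := by
  simp only [diagWeight, diagonal_mul, Pi.mul_apply, mul_assoc]

lemma mul_exp_add_exp_sub_exp_neg_sub_exp_neg_nonneg {k t u v : ℝ} (hk : 0 ≤ k)
    (huv : u + v = k * t) : 0 ≤ t * (exp u + exp v - exp (-u) - exp (-v)) := by
  rcases le_total 0 t with ht | ht
  · have : 0 ≤ u + v := huv ▸ mul_nonneg hk ht
    nlinarith [exp_le_exp.2 (by linarith : -u ≤ v), exp_le_exp.2 (by linarith : -v ≤ u)]
  · have : u + v ≤ 0 := huv ▸ mul_nonpos_of_nonneg_of_nonpos hk ht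
    nlinarith [exp_le_exp.2 (by linarith : v ≤ -u), exp_le_exp.2 (by linarith : u ≤ -v)]

lemma diag_add_mul_diagWeight_symmetrized_nonneg {s : Fin 3 → ℝ} (hs : 0 ≤ s 0 + s 1)
    (R : M3) :
    0 ≤ (R 0 0 + R 1 1) * (diagWeight s R + diagWeight (s ∘ Equiv.swap 0 1) R -
      diagWeight (s * signFlip 2) R - diagWeight (s ∘ Equiv.swap 0 1 * signFlip 2) R) := by
  have hw (t : Fin 3 → ℝ) :
      diagWeight t R = exp (t 0 * R 0 0 + t 1 * R 1 1) * exp (t 2 * R 2 2) := by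
    simp [diagWeight, Fin.sum_univ_three, ← exp_add]
  have hwε (t : Fin 3 → ℝ) : diagWeight (t * signFlip 2) R =
      exp (-(t 0 * R 0 0 + t 1 * R 1 1)) * exp (t 2 * R 2 2) := by
    rw [hw, Pi.mul_apply, Pi.mul_apply, Pi.mul_apply, signFlip_self,
      signFlip_of_ne (by decide : (0 : Fin 3) ≠ 2), signFlip_of_ne (by decide : (1 : Fin 3) ≠ 2)]
    ring_nf
  have hτ2 : Equiv.swap (0 : Fin 3) 1 2 = 2 := by decide
  simp only [hwε, hw, Function.comp_apply, hτ2, Equiv.swap_apply_left, Equiv.swap_apply_right]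
  have := mul_nonneg (mul_exp_add_exp_sub_exp_neg_sub_exp_neg_nonneg hs
    (t := R 0 0 + R 1 1) (u := s 0 * R 0 0 + s 1 * R 1 1) (v := s 1 * R 0 0 + s 0 * R 1 1)
    (by ring)) (exp_pos (s 2 * R 2 2)).le
  linarith

section Moments

variable {μ : Measure M3}

lemma diagMoment_comp_perm (hμ : IsBiInvariantSO3 μ) (s : Fin 3 → ℝ) (σ : Equiv.Perm (Fin 3))
    (i : Fin 3) : diagMoment μ (s ∘ σ) i = diagMoment μ s (σ i) := by
  rw [diagMoment, ← hμ.integral_submatrix σ]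
  simp only [submatrix_apply, diagWeight_submatrix, diagMoment]

lemma diagMoment_eq_mul_diagMoment_mul (hμ : IsBiInvariantSO3 μ) {ε : Fin 3 → ℝ}
    (hε : diagonal ε ∈ SO3) (s : Fin 3 → ℝ) (i : Fin 3) :
    diagMoment μ s i = ε i * diagMoment μ (s * ε) i := by
  rw [diagMoment, ← hμ.integral_mul_mul hε one_mem_SO3, diagMoment, ← integral_const_mul]
  simp only [Matrix.mul_one, diagWeight_diagonal_mul, diagonal_mul, mul_assoc]

lemma integral_apply_mul_diagWeight_eq_zero (hμ : IsBiInvariantSO3 μ) (s : Fin 3 → ℝ)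
    {i j : Fin 3} (hij : i ≠ j) : ∫ R, R i j * diagWeight s R ∂μ = 0 := by
  have hD := diagonal_signFlip_mem_SO3 j
  have hflip (R : M3) : (diagonal (signFlip j) * R * diagonal (signFlip j)) i j *
      diagWeight s (diagonal (signFlip j) * R * diagonal (signFlip j)) =
        -(R i j * diagWeight s R) := by
    have hdiag (k : Fin 3) : (diagonal (signFlip j) * R * diagonal (signFlip j)) k k = R k k := by
      simp only [diagonal_mul, mul_diagonal, signFlip]; split_ifs <;> ring
    simp only [diagWeight, hdiag]
    simp [diagonal_mul, mul_diagonal, signFlip, hij]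
  have h := hμ.integral_mul_mul hD hD fun R => R i j * diagWeight s R
  simp only [hflip, integral_neg] at h
  linarith

lemma integral_trace_mul_diagWeight (hμ : IsBiInvariantSO3 μ) [IsFiniteMeasure μ]
    (s : Fin 3 → ℝ) (Q : M3) :
    ∫ R, (Qᵀ * R).trace * diagWeight s R ∂μ = ∑ i, Q i i * diagMoment μ s i := by
  have hexpand (R : M3) : (Qᵀ * R).trace * diagWeight s R =
      ∑ i, ∑ j, Q i j * (R i j * diagWeight s R) := by
    simp only [trace, diag, mul_apply, transpose_apply, Finset.sum_mul]
    rw [Finset.sum_comm]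
    simp only [mul_assoc]
  have hint (i j : Fin 3) : Integrable (fun R : M3 => R i j * diagWeight s R) μ :=
    hμ.integrable_of_continuous (by fun_prop)
  simp only [hexpand]
  rw [integral_finsetSum (f := fun i R => ∑ j, Q i j * (R i j * diagWeight s R)) _
    fun i _ => integrable_finsetSum _ fun j _ => (hint i j).const_mul _]
  refine Finset.sum_congr rfl fun i _ => ?_
  rw [integral_finsetSum (f := fun j R => Q i j * (R i j * diagWeight s R)) _
    fun j _ => (hint i j).const_mul _,
    Finset.sum_eq_single i (fun j _ hji => by
      rw [integral_const_mul, integral_apply_mul_diagWeight_eq_zero hμ s (Ne.symm hji), mul_zero])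
      (by simp), integral_const_mul, diagMoment]

lemma integral_trace_mul_exp_trace (hμ : IsBiInvariantSO3 μ) {U V : M3} (hU : U ∈ SO3)
    (hV : V ∈ SO3) (s : Fin 3 → ℝ) (A : M3) :
    ∫ X, (Aᵀ * X).trace * exp ((U * diagonal s * Vᵀ)ᵀ * X).trace ∂μ =
      ∫ Y, ((Uᵀ * A * V)ᵀ * Y).trace * diagWeight s Y ∂μ := by
  rw [← hμ.integral_mul_mul hU (transpose_mem_SO3 hV)]
  have hS : Uᵀ * (U * diagonal s * Vᵀ) * V = diagonal s := by
    rw [← Matrix.mul_assoc, ← Matrix.mul_assoc, hU.1, Matrix.one_mul, Matrix.mul_assoc, hV.1,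
      Matrix.mul_one]
  simp only [trace_transpose_mul_mul_mul_transpose, hS, trace_diagonal_transpose_mul, diagWeight]

lemma diagMoment_zero_add_diagMoment_one_nonneg (hμ : IsBiInvariantSO3 μ) [IsFiniteMeasure μ]
    {s : Fin 3 → ℝ} (hs : 0 ≤ s 0 + s 1) : 0 ≤ diagMoment μ s 0 + diagMoment μ s 1 := by
  set τ := Equiv.swap (0 : Fin 3) 1
  have hpair (t : Fin 3 → ℝ) :
      ∫ R, (R 0 0 + R 1 1) * diagWeight t R ∂μ = diagMoment μ t 0 + diagMoment μ t 1 := by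
    simp only [add_mul]
    exact integral_add (hμ.integrable_of_continuous (by fun_prop))
      (hμ.integrable_of_continuous (by fun_prop))
  have hswap : diagMoment μ (s ∘ τ) 0 + diagMoment μ (s ∘ τ) 1 =
      diagMoment μ s 0 + diagMoment μ s 1 := by
    rw [diagMoment_comp_perm hμ, diagMoment_comp_perm hμ, Equiv.swap_apply_left,
      Equiv.swap_apply_right, add_comm]
  have hflip (t : Fin 3 → ℝ) :
      diagMoment μ (t * signFlip 2) 0 + diagMoment μ (t * signFlip 2) 1 =
        -(diagMoment μ t 0 + diagMoment μ t 1) := by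
    rw [diagMoment_eq_mul_diagMoment_mul hμ (diagonal_signFlip_mem_SO3 2) t 0,
      diagMoment_eq_mul_diagMoment_mul hμ (diagonal_signFlip_mem_SO3 2) t 1,
      signFlip_of_ne (by decide : (0 : Fin 3) ≠ 2), signFlip_of_ne (by decide : (1 : Fin 3) ≠ 2)]
    ring
  have hsymm : 4 * (diagMoment μ s 0 + diagMoment μ s 1) = ∫ R, (R 0 0 + R 1 1) *
      (diagWeight s R + diagWeight (s ∘ τ) R - diagWeight (s * signFlip 2) R -
        diagWeight (s ∘ τ * signFlip 2) R) ∂μ := by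
    simp only [mul_add, mul_sub]
    rw [integral_sub, integral_sub, integral_add, hpair, hpair, hpair, hpair, hswap, hflip,
      hflip, hswap]
    · ring
    all_goals exact hμ.integrable_of_continuous (by fun_prop)
  exact nonneg_of_mul_nonneg_right (hsymm ▸ integral_nonneg
    (diag_add_mul_diagWeight_symmetrized_nonneg hs)) (by norm_num : (0 : ℝ) < 4)

lemma diagMoment_add_diagMoment_nonneg (hμ : IsBiInvariantSO3 μ) [IsFiniteMeasure μ]
    {s : Fin 3 → ℝ} (σ : Equiv.Perm (Fin 3)) (hs : 0 ≤ s (σ 0) + s (σ 1)) :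
    0 ≤ diagMoment μ s (σ 0) + diagMoment μ s (σ 1) := by
  rw [← diagMoment_comp_perm hμ, ← diagMoment_comp_perm hμ]
  exact diagMoment_zero_add_diagMoment_one_nonneg hμ hs

lemma sum_one_sub_diag_mul_diagMoment_nonneg (hμ : IsBiInvariantSO3 μ) [IsFiniteMeasure μ]
    {s : Fin 3 → ℝ} (h01 : s 1 ≤ s 0) (h12 : |s 2| ≤ s 1) {Q : M3} (hQ : Q ∈ SO3) :
    0 ≤ ∑ i, (1 - Q i i) * diagMoment μ s i := by
  have hs2 := abs_le.mp h12
  have h120 : Equiv.swap (1 : Fin 3) 2 0 = 0 := by decide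
  have h021 : Equiv.swap (0 : Fin 3) 2 1 = 1 := by decide
  have m01 := diagMoment_zero_add_diagMoment_one_nonneg hμ (s := s) (by linarith)
  have m02 := diagMoment_add_diagMoment_nonneg hμ (s := s) (Equiv.swap 1 2)
    (by rw [h120, Equiv.swap_apply_left]; linarith)
  have m21 := diagMoment_add_diagMoment_nonneg hμ (s := s) (Equiv.swap 0 2)
    (by rw [h021, Equiv.swap_apply_left]; linarith)
  have c0 := one_add_sum_signFlip_mul_diag_nonneg hQ 0
  have c1 := one_add_sum_signFlip_mul_diag_nonneg hQ 1
  have c2 := one_add_sum_signFlip_mul_diag_nonneg hQ 2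
  rw [h120, Equiv.swap_apply_left] at m02
  rw [h021, Equiv.swap_apply_left] at m21
  simp only [Fin.sum_univ_three, signFlip, Fin.reduceEq, ↓reduceIte] at c0 c1 c2 ⊢
  nlinarith [mul_nonneg m01 c2, mul_nonneg m02 c1, mul_nonneg m21 c0]

end Moments

/-- Let `F = U S Vᵀ` be a proper singular value decomposition
(`U, V ∈ SO(3)`, `S = diag[s₁,s₂,s₃]`, `s₁ ≥ s₂ ≥ |s₃| ≥ 0`), and let
`p(R̃) = exp(tr(FᵀR̃))/c(F)` be the matrix Fisher density on SO(3).  Then the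
minimum mean square error mean attitude is `U Vᵀ`: for every `R ∈ SO(3)`,
`∫ ‖UVᵀ − R̃‖_F² p(R̃) dR̃ ≤ ∫ ‖R − R̃‖_F² p(R̃) dR̃`. -/
theorem matrixFisher_mmse_mean
    (μ : Measure M3) [IsProbabilityMeasure μ] (hsupp : μ SO3ᶜ = 0)
    (hleft : ∀ Q ∈ SO3, μ.map (fun R => Q * R) = μ)
    (hright : ∀ Q ∈ SO3, μ.map (fun R => R * Q) = μ)
    (F U V : M3) (s₁ s₂ s₃ : ℝ)
    (hU : U ∈ SO3) (hV : V ∈ SO3) (h12 : s₁ ≥ s₂) (h23 : s₂ ≥ |s₃|)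
    (hF : F = U * Matrix.diagonal ![s₁, s₂, s₃] * Vᵀ) :
    ∀ R ∈ SO3,
      (∫ Rt, frobSq (U * Vᵀ - Rt) * (Real.exp (Fᵀ * Rt).trace / mfC μ F) ∂μ) ≤
        ∫ Rt, frobSq (R - Rt) * (Real.exp (Fᵀ * Rt).trace / mfC μ F) ∂μ := by
  intro R hR
  have hμ : IsBiInvariantSO3 μ := ⟨hsupp, hleft, hright⟩
  have hdiff : Uᵀ * (U * Vᵀ - R) * V = 1 - Uᵀ * R * V := by
    rw [Matrix.mul_sub, Matrix.sub_mul, ← Matrix.mul_assoc, hU.1, Matrix.one_mul, Matrix.mul_assoc,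
      hV.1]
  have hmoment : 0 ≤ ∫ X, ((U * Vᵀ - R)ᵀ * X).trace * Real.exp (Fᵀ * X).trace ∂μ := by
    rw [hF, integral_trace_mul_exp_trace hμ hU hV, hdiff, integral_trace_mul_diagWeight hμ]
    simpa using sum_one_sub_diag_mul_diagMoment_nonneg hμ (s := ![s₁, s₂, s₃]) h12 h23
      (mul_mem_SO3 (mul_mem_SO3 (transpose_mem_SO3 hU) hR) hV)
  have hc : 0 ≤ mfC μ F := integral_nonneg fun X => (Real.exp_pos _).le
  rw [← sub_nonneg, hμ.integral_frobSq_sub_mul_sub (mul_mem_SO3 hU (transpose_mem_SO3 hV)) hR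
    (by fun_prop)]
  simp only [← mul_div_assoc, integral_div]
  exact div_nonneg (mul_nonneg zero_le_two hmoment) hc

end
end

section
/- Let F ∈ ℝ^{3×3}. For i = 1,…,N_Z let Z_i ∈ SO(3) and F_{Z_i} ∈ ℝ^{3×3}, and for j = 1,…,N_z let a_j, z_j be unit vectors in ℝ³, b_j > 0, and B_j ∈ SO(3). Define G = F + Σ_{i=1}^{N_Z} Z_i F_{Z_i}ᵀ + Σ_{j=1}^{N_z} b_j B_j a_j z_jᵀ. Then for every R ∈ SO(3), exp(tr(FᵀR)) · Π_{i=1}^{N_Z} exp(tr(F_{Z_i}ᵀ Rᵀ Z_i)) · Π_{j=1}^{N_z} exp(b_j a_jᵀ B_jᵀ R z_j) = exp(tr(GᵀR)). Consequently, the a posteriori density obtained by multiplying the matrix Fisher prior density by these likelihoods and normalizing over SO(3) equals exp(tr(GᵀR))/c(G); that is, the posterior distribution is the matrix Fisher distribution 𝓜(G). -/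
open MeasureTheory Matrix Real

noncomputable section

/-- Trace identity for full attitude measurement terms. -/
lemma trace_attitude (FZ R Zi : M3) :
    ((Zi * FZᵀ)ᵀ * R).trace = (FZᵀ * Rᵀ * Zi).trace := by
  rw [← Matrix.trace_transpose (FZᵀ * Rᵀ * Zi)]
  simp only [transpose_mul, transpose_transpose]
  rw [Matrix.mul_assoc, Matrix.trace_mul_comm FZ, Matrix.mul_assoc]

/-- Trace identity for direction measurement terms. -/
lemma trace_direction (bj : ℝ) (u v : Fin 3 → ℝ) (M R : M3) :
    ((bj • vecMulVec (M *ᵥ u) v)ᵀ * R).trace = bj * (u ⬝ᵥ ((Mᵀ * R) *ᵥ v)) := by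
  simp only [Matrix.trace, Matrix.mul_apply, Matrix.vecMulVec_apply, Matrix.mulVec, dotProduct,
    Finset.mul_sum, Finset.sum_mul, Matrix.diag, Matrix.transpose_apply, Matrix.smul_apply,
    smul_eq_mul]
  conv_lhs => rw [Finset.sum_comm]
  conv_lhs => enter [2, x]; rw [Finset.sum_comm]
  rw [Finset.sum_comm]
  conv_lhs => enter [2, x]; rw [Finset.sum_comm]
  exact Finset.sum_congr rfl fun p _ => Finset.sum_congr rfl fun q _ =>
    Finset.sum_congr rfl fun r _ => by ring

/-- The pointwise kernel identity, valid for every `R` (not only `R ∈ SO(3)`). -/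
lemma kernel_eq (F : M3) {NZ Nz : ℕ}
    (Z : Fin NZ → M3) (FZ : Fin NZ → M3)
    (a z : Fin Nz → (Fin 3 → ℝ)) (b : Fin Nz → ℝ) (B : Fin Nz → M3)
    (G : M3)
    (hG : G = F + (∑ i, Z i * (FZ i)ᵀ) +
        ∑ j, b j • Matrix.vecMulVec (B j *ᵥ a j) (z j)) (R : M3) :
    Real.exp (Fᵀ * R).trace *
        (∏ i, Real.exp ((FZ i)ᵀ * Rᵀ * Z i).trace) *
        (∏ j, Real.exp (b j * (a j ⬝ᵥ (((B j)ᵀ * R) *ᵥ z j)))) =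
      Real.exp (Gᵀ * R).trace := by
  rw [hG]
  rw [← Real.exp_sum, ← Real.exp_sum, ← Real.exp_add, ← Real.exp_add]
  congr 1
  simp only [Matrix.transpose_add, Matrix.add_mul, Matrix.trace_add,
    Matrix.transpose_sum, Matrix.sum_mul, Matrix.trace_sum]
  congr 1
  · congr 1
    exact Finset.sum_congr rfl fun i _ => (trace_attitude (FZ i) R (Z i)).symm
  · exact Finset.sum_congr rfl fun j _ => (trace_direction (b j) (a j) (z j) (B j) R).symm

/-- Bayesian measurement update for the matrix Fisher
distribution.  Let `F ∈ ℝ^{3×3}`; let `Z i ∈ SO(3)` with parameters `F_{Z i}` be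
full attitude measurements, and let `z j` be unit-vector direction measurements of
known inertial directions `a j`, with concentrations `b j > 0` and biases
`B j ∈ SO(3)`.  With `G = F + Σᵢ Zᵢ F_{Zᵢ}ᵀ + Σⱼ bⱼ Bⱼ aⱼ zⱼᵀ`, the product of the
prior density kernel and all measurement likelihood kernels equals
`exp(tr(GᵀR))`; consequently the normalized a posteriori density is
`exp(tr(GᵀR))/c(G)`, i.e. the posterior is the matrix Fisher distribution `𝓜(G)`. -/
theorem matrixFisher_posterior
    (μ : Measure M3) [IsProbabilityMeasure μ] (hsupp : μ SO3ᶜ = 0)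
    (hleft : ∀ Q ∈ SO3, μ.map (fun R => Q * R) = μ)
    (hright : ∀ Q ∈ SO3, μ.map (fun R => R * Q) = μ)
    (F : M3) (NZ Nz : ℕ)
    (Z : Fin NZ → M3) (FZ : Fin NZ → M3)
    (a z : Fin Nz → (Fin 3 → ℝ)) (b : Fin Nz → ℝ) (B : Fin Nz → M3)
    (hZ : ∀ i, Z i ∈ SO3) (hB : ∀ j, B j ∈ SO3)
    (ha : ∀ j, a j ⬝ᵥ a j = 1) (hz : ∀ j, z j ⬝ᵥ z j = 1) (hb : ∀ j, 0 < b j)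
    (G : M3)
    (hG : G = F + (∑ i, Z i * (FZ i)ᵀ) +
        ∑ j, b j • Matrix.vecMulVec (B j *ᵥ a j) (z j)) :
    (∀ R ∈ SO3,
      Real.exp (Fᵀ * R).trace *
          (∏ i, Real.exp ((FZ i)ᵀ * Rᵀ * Z i).trace) *
          (∏ j, Real.exp (b j * (a j ⬝ᵥ (((B j)ᵀ * R) *ᵥ z j)))) =
        Real.exp (Gᵀ * R).trace) ∧
    (∀ R ∈ SO3,
      (Real.exp (Fᵀ * R).trace *
            (∏ i, Real.exp ((FZ i)ᵀ * Rᵀ * Z i).trace) *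
            (∏ j, Real.exp (b j * (a j ⬝ᵥ (((B j)ᵀ * R) *ᵥ z j))))) /
          (∫ R', Real.exp (Fᵀ * R').trace *
              (∏ i, Real.exp ((FZ i)ᵀ * R'ᵀ * Z i).trace) *
              (∏ j, Real.exp (b j * (a j ⬝ᵥ (((B j)ᵀ * R') *ᵥ z j)))) ∂μ) =
        Real.exp (Gᵀ * R).trace / mfC μ G) := by
  have key := kernel_eq F Z FZ a z b B G hG
  refine ⟨fun R _ => key R, fun R _ => ?_⟩
  rw [key R]
  congr 1
  rw [show (fun R' => Real.exp (Fᵀ * R').trace *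
        (∏ i, Real.exp ((FZ i)ᵀ * R'ᵀ * Z i).trace) *
        (∏ j, Real.exp (b j * (a j ⬝ᵥ (((B j)ᵀ * R') *ᵥ z j))))) =
      fun R' => Real.exp (Gᵀ * R').trace from funext key]
  rfl
end
end
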